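/- arXiv:0902.2805 — 5 statements merged into one kernel-verified Lean document; each statement's English description precedes it below -/
import Mathlib

section
/- A real number c satisfies ∫_P x₁ e^{-c(x₁+x₂)} dx₁ dx₂ = 0 and ∫_P x₂ e^{-c(x₁+x₂)} dx₁ dx₂ = 0 if and only if c is the (unique) global minimizer of F. -/
/-!
Write `s = x₁ + x₂`. The reflection `(x₁, x₂) ↦ (x₂, x₁)` preserves `P`, so the two moments
coincide and both vanish iff `G c = ∫_P s e^{-cs}` does. Differentiating under the integral
gives `F' = -G`, so a minimizer of `F` is a zero of `G`. Conversely, the tangent-line bound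
`e^{-c's} ≥ e^{-cs} (1 + (c - c') s)`, strict where `s ≠ 0`, integrates to
`F c' > F c + (c - c') G c` for `c' ≠ c`.
-/

open MeasureTheory Real Set

/-- The closed pentagon with vertices (-1,-1), (1,-1), (1,0), (0,1), (-1,1). -/
def P : Set (ℝ × ℝ) :=
  {p : ℝ × ℝ | -1 ≤ p.1 ∧ p.1 ≤ 1 ∧ -1 ≤ p.2 ∧ p.2 ≤ 1 ∧ p.1 + p.2 ≤ 1}

noncomputable def F (c : ℝ) : ℝ := ∫ p in P, Real.exp (-c * (p.1 + p.2))

lemma neg_mul_le_of_abs_le {c t C B : ℝ} (hc : |c| ≤ C) (ht : |t| ≤ B) : -c * t ≤ C * B :=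
  calc -c * t ≤ |-c * t| := le_abs_self _
    _ = |c| * |t| := by rw [abs_mul, abs_neg]
    _ ≤ C * B := mul_le_mul hc ht (abs_nonneg _) ((abs_nonneg _).trans hc)

lemma exp_add_mul_exp_lt_exp {a b : ℝ} (h : a ≠ b) : exp b + (a - b) * exp b < exp a := by
  have := add_one_lt_exp (sub_ne_zero.2 h)
  calc exp b + (a - b) * exp b = (a - b + 1) * exp b := by ring
    _ < exp (a - b) * exp b := by gcongr
    _ = exp a := by rw [← exp_add, sub_add_cancel]

lemma exp_add_mul_exp_le_exp (a b : ℝ) : exp b + (a - b) * exp b ≤ exp a := by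
  rcases eq_or_ne a b with rfl | h
  · simp
  · exact (exp_add_mul_exp_lt_exp h).le

section ExpIntegral

variable {α : Type*} [MeasurableSpace α] {μ : Measure α} [IsFiniteMeasure μ]
  {s : α → ℝ} {B : ℝ}

lemma integrable_exp_neg_mul (hs : AEStronglyMeasurable s μ) (hB : ∀ᵐ x ∂μ, |s x| ≤ B)
    (c : ℝ) : Integrable (fun x => exp (-c * s x)) μ := by
  refine .of_bound (by fun_prop) (exp (|c| * B)) (hB.mono fun x hx => ?_)
  rw [norm_eq_abs, abs_exp, exp_le_exp]
  exact neg_mul_le_of_abs_le le_rfl hx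

lemma integrable_mul_exp_neg_mul (hs : AEStronglyMeasurable s μ) (hB : ∀ᵐ x ∂μ, |s x| ≤ B)
    (c : ℝ) : Integrable (fun x => s x * exp (-c * s x)) μ := by
  refine (integrable_exp_neg_mul hs hB c).bdd_mul hs (c := B) (hB.mono fun x hx => ?_)
  rwa [norm_eq_abs]

lemma hasDerivAt_integral_exp_neg_mul (hs : AEStronglyMeasurable s μ)
    (hB : ∀ᵐ x ∂μ, |s x| ≤ B) (c₀ : ℝ) :
    HasDerivAt (fun c => ∫ x, exp (-c * s x) ∂μ) (-∫ x, s x * exp (-c₀ * s x) ∂μ) c₀ := by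
  rw [← integral_neg]
  refine (hasDerivAt_integral_of_dominated_loc_of_deriv_le (F := fun c x => exp (-c * s x))
    (F' := fun c x => -(s x * exp (-c * s x))) (Metric.ball_mem_nhds c₀ one_pos)
    (.of_forall fun c => by fun_prop) (integrable_exp_neg_mul hs hB c₀) (by fun_prop)
    (bound := fun _ => B * exp ((|c₀| + 1) * B)) ?_ (integrable_const _) ?_).2
  · filter_upwards [hB] with x hx c hc
    have hc' : |c| ≤ |c₀| + 1 := by
      have := abs_sub_abs_le_abs_sub c c₀
      rw [Metric.mem_ball, dist_eq] at hc
      linarith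
    rw [norm_neg, norm_mul, norm_eq_abs, norm_eq_abs, abs_exp]
    exact mul_le_mul hx (exp_le_exp.2 (neg_mul_le_of_abs_le hc' hx)) (exp_pos _).le
      ((abs_nonneg _).trans hx)
  · refine .of_forall fun x c _ => ?_
    simpa [mul_comm] using ((hasDerivAt_id c).neg.mul_const (s x)).exp

lemma integral_exp_neg_mul_tangent_lt (hs : AEStronglyMeasurable s μ)
    (hB : ∀ᵐ x ∂μ, |s x| ≤ B) (hsupp : μ (Function.support s) ≠ 0) {c c' : ℝ} (hc : c' ≠ c) :
    (∫ x, exp (-c * s x) ∂μ) + (c - c') * (∫ x, s x * exp (-c * s x) ∂μ)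
      < ∫ x, exp (-c' * s x) ∂μ := by
  have tangent (x : α) : exp (-c * s x) + (c - c') * (s x * exp (-c * s x))
      = exp (-c * s x) + (-c' * s x - -c * s x) * exp (-c * s x) := by ring
  have gap_nonneg : 0 ≤ fun x =>
      exp (-c' * s x) - (exp (-c * s x) + (c - c') * (s x * exp (-c * s x))) := fun x =>
    sub_nonneg.2 ((tangent x).trans_le (exp_add_mul_exp_le_exp _ _))
  have support_subset : Function.support s ⊆ Function.support fun x =>
      exp (-c' * s x) - (exp (-c * s x) + (c - c') * (s x * exp (-c * s x))) := fun x hx =>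
    (sub_pos.2 ((tangent x).trans_lt (exp_add_mul_exp_lt_exp fun h => hx <|
      (mul_eq_zero.1 (show (c - c') * s x = 0 by linarith)).resolve_left
        (sub_ne_zero.2 hc.symm)))).ne'
  have hint₁ := integrable_exp_neg_mul hs hB c
  have hint₂ := (integrable_mul_exp_neg_mul hs hB c).const_mul (c - c')
  have hint : Integrable (fun x => exp (-c * s x) + (c - c') * (s x * exp (-c * s x))) μ :=
    hint₁.add hint₂
  have hpos := (integral_pos_iff_support_of_nonneg gap_nonneg
      ((integrable_exp_neg_mul hs hB c').sub hint)).2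
      ((pos_iff_ne_zero.2 hsupp).trans_le (measure_mono support_subset))
  rw [integral_sub (integrable_exp_neg_mul hs hB c') hint,
    integral_add hint₁ hint₂, integral_const_mul] at hpos
  linarith

theorem strict_global_min_integral_exp_neg_mul_iff (hs : AEStronglyMeasurable s μ)
    (hB : ∀ᵐ x ∂μ, |s x| ≤ B) (hsupp : μ (Function.support s) ≠ 0) (c : ℝ) :
    ((∀ c', ∫ x, exp (-c * s x) ∂μ ≤ ∫ x, exp (-c' * s x) ∂μ) ∧
        ∀ c', c' ≠ c → ∫ x, exp (-c * s x) ∂μ < ∫ x, exp (-c' * s x) ∂μ) ↔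
      ∫ x, s x * exp (-c * s x) ∂μ = 0 := by
  constructor
  · rintro ⟨hmin, -⟩
    have hlocal : IsLocalMin (fun c => ∫ x, exp (-c * s x) ∂μ) c := .of_forall hmin
    exact neg_eq_zero.1 (hlocal.hasDerivAt_eq_zero (hasDerivAt_integral_exp_neg_mul hs hB c))
  · intro hG
    have hlt (c' : ℝ) (hc : c' ≠ c) := integral_exp_neg_mul_tangent_lt hs hB hsupp hc
    simp only [hG, mul_zero, add_zero] at hlt
    refine ⟨fun c' => ?_, hlt⟩
    rcases eq_or_ne c' c with rfl | hc
    · rfl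
    · exact (hlt c' hc).le

end ExpIntegral

lemma setIntegral_comp_swap {α E : Type*} [MeasureSpace α] [SFinite (volume : Measure α)]
    [NormedAddCommGroup E] [NormedSpace ℝ E] {S : Set (α × α)} (hS : Prod.swap ⁻¹' S = S)
    (f : α × α → E) : ∫ p in S, f p.swap = ∫ p in S, f p := by
  have hswap : MeasurePreserving (Prod.swap : α × α → α × α) volume volume := by
    rw [Measure.volume_eq_prod]; exact Measure.measurePreserving_swap
  simpa only [hS] using
    hswap.setIntegral_preimage_emb MeasurableEquiv.prodComm.measurableEmbedding f S

lemma isClosed_P : IsClosed P := by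
  simp only [P, ofPred_and]
  exact (isClosed_le continuous_const continuous_fst).inter <|
    (isClosed_le continuous_fst continuous_const).inter <|
    (isClosed_le continuous_const continuous_snd).inter <|
    (isClosed_le continuous_snd continuous_const).inter <|
    isClosed_le (continuous_fst.add continuous_snd) continuous_const

lemma isCompact_P : IsCompact P :=
  (isCompact_Icc (a := ((-1 : ℝ), (-1 : ℝ))) (b := (1, 1))).of_isClosed_subset isClosed_P
    fun _ ⟨h₁, h₂, h₃, h₄, _⟩ => ⟨⟨h₁, h₃⟩, h₂, h₄⟩

instance isFiniteMeasure_restrict_P : IsFiniteMeasure (volume.restrict P) :=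
  isFiniteMeasure_restrict.2 isCompact_P.measure_lt_top.ne

lemma preimage_swap_P : Prod.swap ⁻¹' P = P := by
  ext ⟨x, y⟩
  simp only [P, mem_preimage, Prod.swap_prod_mk, mem_ofPred_eq, add_comm y x]
  tauto

lemma abs_fst_add_snd_le_of_mem_P {p : ℝ × ℝ} (hp : p ∈ P) : |p.1 + p.2| ≤ 2 := by
  obtain ⟨h₁, -, h₃, -, h₅⟩ := hp
  exact abs_le.2 ⟨by linarith, by linarith⟩

lemma volume_restrict_P_support_ne_zero :
    volume.restrict P (Function.support fun p : ℝ × ℝ => p.1 + p.2) ≠ 0 := by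
  have hsquare : Ioo (0 : ℝ) (1 / 2) ×ˢ Ioo (0 : ℝ) (1 / 2) ⊆
      (Function.support fun p : ℝ × ℝ => p.1 + p.2) ∩ P :=
    fun p ⟨⟨h₁, h₂⟩, h₃, h₄⟩ =>
      ⟨by simp only [Function.mem_support]; linarith, by refine ⟨?_, ?_, ?_, ?_, ?_⟩ <;> linarith⟩
  rw [Measure.restrict_apply' isClosed_P.measurableSet]
  exact ne_bot_of_le_ne_bot ((isOpen_Ioo.prod isOpen_Ioo).measure_ne_zero volume
    ⟨(1 / 4, 1 / 4), by norm_num, by norm_num⟩) (measure_mono hsquare)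

lemma moments_P_eq_zero_iff (c : ℝ) :
    ((∫ p in P, p.1 * exp (-c * (p.1 + p.2))) = 0 ∧
        (∫ p in P, p.2 * exp (-c * (p.1 + p.2))) = 0) ↔
      ∫ p in P, (p.1 + p.2) * exp (-c * (p.1 + p.2)) = 0 := by
  have hsymm : ∫ p in P, p.1 * exp (-c * (p.1 + p.2)) =
      ∫ p in P, p.2 * exp (-c * (p.1 + p.2)) := by
    simpa only [Prod.fst_swap, Prod.snd_swap, add_comm] using
      setIntegral_comp_swap preimage_swap_P fun p : ℝ × ℝ => p.2 * exp (-c * (p.1 + p.2))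
  have hsum : ∫ p in P, (p.1 + p.2) * exp (-c * (p.1 + p.2)) =
      (∫ p in P, p.1 * exp (-c * (p.1 + p.2))) + ∫ p in P, p.2 * exp (-c * (p.1 + p.2)) := by
    simp only [add_mul]
    exact integral_add (ContinuousOn.integrableOn_compact isCompact_P (by fun_prop))
      (ContinuousOn.integrableOn_compact isCompact_P (by fun_prop))
  rw [hsum, ← hsymm]
  constructor
  · rintro ⟨h, -⟩; linarith
  · intro h; exact ⟨by linarith, by linarith⟩

/-- `c` satisfies the vanishing-moment conditions iff `c` is the unique global
minimizer of `F`. -/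
theorem stmt_3 (c : ℝ) :
    ((∫ p in P, p.1 * Real.exp (-c * (p.1 + p.2))) = 0 ∧
        (∫ p in P, p.2 * Real.exp (-c * (p.1 + p.2))) = 0) ↔
      ((∀ c' : ℝ, F c ≤ F c') ∧ ∀ c' : ℝ, c' ≠ c → F c < F c') := by
  rw [moments_P_eq_zero_iff]
  exact (strict_global_min_integral_exp_neg_mul_iff (by fun_prop)
    (ae_restrict_of_forall_mem isClosed_P.measurableSet fun _ => abs_fst_add_snd_le_of_mem_P)
    volume_restrict_P_support_ne_zero c).symm
end

section
/- The unique global minimizer c* of F satisfies -0.434749 < c* < -0.434747. -/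
open MeasureTheory Real Set

/-!
`F` is convex, being an integral of the convex functions `c ↦ exp (-c s)`. For a convex
function, a point `m` with `F m < F a` and `F m < F b`, `a < m < b`, traps every global
minimizer in `(a, b)`: if a minimizer `x` lay outside, one of `a`, `b` would sit on the
segment between `m` and `x`, where `F ≤ max (F m) (F x) = F m`. We take
`m = -0.434748` and `a, b = m ∓ 10⁻⁶`, and check the two strict inequalities on the closed
form of `F` (Fubini over the vertical fibres of `P`) with Taylor bounds for `exp`.
-/

theorem ConvexOn.notMem_segment_of_lt {𝕜 E β : Type*} [Semiring 𝕜] [PartialOrder 𝕜]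
    [AddCommMonoid E] [SMul 𝕜 E] [AddCommMonoid β] [LinearOrder β] [IsOrderedAddMonoid β]
    [Module 𝕜 β] [PosSMulStrictMono 𝕜 β] {f : E → β} {x m a : E}
    (hf : ConvexOn 𝕜 univ f) (hx : ∀ y, f x ≤ f y) (h : f m < f a) :
    a ∉ segment 𝕜 m x := fun ha =>
  h.not_ge ((hf.le_on_segment (mem_univ m) (mem_univ x) ha).trans (max_le le_rfl (hx m)))

theorem ConvexOn.lt_minimizer_of_lt {f : ℝ → ℝ} (hf : ConvexOn ℝ univ f) {x a m : ℝ}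
    (hx : ∀ y, f x ≤ f y) (ham : a < m) (h : f m < f a) : a < x := by
  by_contra! hxa
  exact hf.notMem_segment_of_lt hx h (segment_eq_uIcc m x ▸ Icc_subset_uIcc' ⟨hxa, ham.le⟩)

theorem ConvexOn.minimizer_lt_of_lt {f : ℝ → ℝ} (hf : ConvexOn ℝ univ f) {x b m : ℝ}
    (hx : ∀ y, f x ≤ f y) (hmb : m < b) (h : f m < f b) : x < b := by
  by_contra! hbx
  exact hf.notMem_segment_of_lt hx h (segment_eq_uIcc m x ▸ Icc_subset_uIcc ⟨hmb.le, hbx⟩)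

theorem convexOn_integral {α E : Type*} [MeasurableSpace α] {μ : Measure α} [AddCommMonoid E]
    [Module ℝ E] {s : Set E} {f : E → α → ℝ} (hs : Convex ℝ s) (hf : ∀ a, ConvexOn ℝ s (f · a))
    (hint : ∀ x ∈ s, Integrable (f x) μ) : ConvexOn ℝ s (fun x => ∫ a, f x a ∂μ) := by
  refine ⟨hs, fun x hx y hy t u ht hu htu => ?_⟩
  have hx' := (hint x hx).const_mul t
  have hy' := (hint y hy).const_mul u
  calc ∫ a, f (t • x + u • y) a ∂μ ≤ ∫ a, (t * f x a + u * f y a) ∂μ :=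
        integral_mono (hint _ (hs hx hy ht hu htu)) (hx'.add hy') fun a => (hf a).2 hx hy ht hu htu
    _ = t • ∫ a, f x a ∂μ + u • ∫ a, f y a ∂μ := by
        rw [integral_add hx' hy', integral_const_mul, integral_const_mul, smul_eq_mul, smul_eq_mul]

theorem convexOn_exp_neg_mul (s : ℝ) : ConvexOn ℝ univ (fun c : ℝ => exp (-c * s)) := by
  refine ⟨convex_univ, fun x _ y _ a b ha hb hab => ?_⟩
  convert convexOn_exp.2 (mem_univ (-x * s)) (mem_univ (-y * s)) ha hb hab using 2
  simp only [smul_eq_mul]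
  ring

theorem setIntegral_prod_eq_integral_fiber {α β E : Type*} [MeasurableSpace α]
    [MeasurableSpace β] [NormedAddCommGroup E] [NormedSpace ℝ E] {μ : Measure α} {ν : Measure β}
    [SFinite μ] [SFinite ν] {R : Set (α × β)} (hR : MeasurableSet R) {f : α × β → E}
    (hf : IntegrableOn f R (μ.prod ν)) :
    ∫ p in R, f p ∂μ.prod ν = ∫ x, ∫ y in Prod.mk x ⁻¹' R, f (x, y) ∂ν ∂μ := by
  rw [← integral_indicator hR, integral_prod _ (hf.integrable_indicator hR)]
  congr 1 with x
  rw [← integral_indicator (measurable_prodMk_left hR)]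
  rfl

theorem integral_exp_neg_mul {c : ℝ} (hc : c ≠ 0) (a b : ℝ) :
    ∫ y in a..b, exp (-c * y) = (exp (-c * a) - exp (-c * b)) / c := by
  rw [intervalIntegral.integral_comp_mul_left (fun y => exp y) (neg_ne_zero.2 hc), integral_exp,
    smul_eq_mul, inv_neg, neg_mul, ← mul_neg, neg_sub, inv_mul_eq_div]

lemma integrableOn_P (c : ℝ) : IntegrableOn (fun p : ℝ × ℝ => exp (-c * (p.1 + p.2))) P :=
  (by fun_prop : Continuous _).continuousOn.integrableOn_compact isCompact_P

lemma convexOn_F : ConvexOn ℝ univ F :=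
  convexOn_integral convex_univ (fun _ => convexOn_exp_neg_mul _) fun c _ => integrableOn_P c

lemma preimage_mk_P {x : ℝ} (hx : x ∈ Icc (-1) 1) :
    Prod.mk x ⁻¹' P = Icc (-1) (min 1 (1 - x)) := by
  ext y
  simp only [P, mem_preimage, mem_ofPred_eq, mem_Icc, le_min_iff]
  constructor
  · rintro ⟨-, -, h₁, h₂, h₃⟩; exact ⟨h₁, h₂, by linarith⟩
  · rintro ⟨h₁, h₂, h₃⟩; exact ⟨hx.1, hx.2, h₁, h₂, by linarith⟩

lemma preimage_mk_P_of_notMem {x : ℝ} (hx : x ∉ Icc (-1) 1) : Prod.mk x ⁻¹' P = ∅ :=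
  eq_empty_of_forall_notMem fun _ h => hx ⟨h.1, h.2.1⟩

lemma F_eq_integral_fiber (c : ℝ) :
    F c = ∫ x in Icc (-1) 1, ∫ y in Icc (-1) (min 1 (1 - x)), exp (-c * (x + y)) := by
  have hint := integrableOn_P c
  rw [Measure.volume_eq_prod] at hint
  rw [F, Measure.volume_eq_prod,
    setIntegral_prod_eq_integral_fiber isCompact_P.isClosed.measurableSet hint,
    ← setIntegral_eq_integral_of_forall_compl_eq_zero (s := Icc (-1) 1) fun x hx => by
      rw [preimage_mk_P_of_notMem hx, setIntegral_empty]]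
  exact setIntegral_congr_fun measurableSet_Icc fun x hx => by rw [preimage_mk_P hx]

lemma F_eq {c : ℝ} (hc : c ≠ 0) :
    F c = (exp (2 * c) - 2 + (1 - c) * exp (-c)) / c ^ 2 := by
  have inner : ∀ x ∈ Icc (-1 : ℝ) 1, ∫ y in Icc (-1) (min 1 (1 - x)), exp (-c * (x + y)) =
      (exp (-c * (x - 1)) - exp (-c * min (x + 1) 1)) / c := fun x hx => by
    rw [integral_Icc_eq_integral_Ioc, ← intervalIntegral.integral_of_le (by grind),
      intervalIntegral.integral_comp_add_left (fun y => exp (-c * y)), integral_exp_neg_mul hc,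
      ← min_add_add_left]
    ring_nf
  have hcont : Continuous fun x : ℝ => exp (-c * min (x + 1) 1) := by fun_prop
  have h₁ : ∫ x in (-1)..1, exp (-c * (x - 1)) = (exp (2 * c) - 1) / c := by
    rw [intervalIntegral.integral_comp_sub_right (fun x => exp (-c * x)), integral_exp_neg_mul hc]
    norm_num [mul_comm]
  have h₂ : ∫ x in (-1)..1, exp (-c * min (x + 1) 1) = (1 - exp (-c)) / c + exp (-c) := by
    have hl : EqOn (fun x => exp (-c * min (x + 1) 1)) (fun x => exp (-c * (x + 1)))
        (uIcc (-1) 0) := fun x hx => by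
      dsimp only; rw [min_eq_left (by grind [uIcc_of_le])]
    have hr : EqOn (fun x => exp (-c * min (x + 1) 1)) (fun _ => exp (-c)) (uIcc 0 1) :=
      fun x hx => by dsimp only; rw [min_eq_right (by grind [uIcc_of_le]), mul_one]
    rw [← intervalIntegral.integral_add_adjacent_intervals (b := 0) (hcont.intervalIntegrable _ _)
        (hcont.intervalIntegrable _ _), intervalIntegral.integral_congr hl,
      intervalIntegral.integral_congr hr,
      intervalIntegral.integral_comp_add_right (fun x => exp (-c * x)), integral_exp_neg_mul hc,
      intervalIntegral.integral_const]
    norm_num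
  rw [F_eq_integral_fiber, setIntegral_congr_fun measurableSet_Icc inner,
    integral_Icc_eq_integral_Ioc, ← intervalIntegral.integral_of_le (by norm_num),
    intervalIntegral.integral_div, intervalIntegral.integral_sub
      (Continuous.intervalIntegrable (by fun_prop) _ _) (hcont.intervalIntegrable _ _), h₁, h₂]
  field_simp
  ring

/- The values compared differ only by about `10⁻¹²` (left) and `2 · 10⁻¹³` (right), so `exp`
is needed to within about `10⁻¹⁴`: `Real.exp_bound` with `n = 16` gives this for `|x| < 0.9`. -/
lemma F_center_lt_F_left : F (-0.434748) < F (-0.434749) := by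
  rw [F_eq (by norm_num), F_eq (by norm_num), div_lt_div_iff₀ (by norm_num) (by norm_num)]
  have h₁ := Real.exp_bound (x := 2 * -0.434748) (by norm_num [abs_le]) (n := 16) (by norm_num)
  have h₂ := Real.exp_bound (x := -(-0.434748)) (by norm_num [abs_le]) (n := 16) (by norm_num)
  have h₃ := Real.exp_bound (x := 2 * -0.434749) (by norm_num [abs_le]) (n := 16) (by norm_num)
  have h₄ := Real.exp_bound (x := -(-0.434749)) (by norm_num [abs_le]) (n := 16) (by norm_num)
  norm_num [abs_le, Finset.sum_range_succ, Nat.factorial] at h₁ h₂ h₃ h₄ ⊢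
  linarith [h₁.2, h₂.2, h₃.1, h₄.1]

lemma F_center_lt_F_right : F (-0.434748) < F (-0.434747) := by
  rw [F_eq (by norm_num), F_eq (by norm_num), div_lt_div_iff₀ (by norm_num) (by norm_num)]
  have h₁ := Real.exp_bound (x := 2 * -0.434748) (by norm_num [abs_le]) (n := 16) (by norm_num)
  have h₂ := Real.exp_bound (x := -(-0.434748)) (by norm_num [abs_le]) (n := 16) (by norm_num)
  have h₃ := Real.exp_bound (x := 2 * -0.434747) (by norm_num [abs_le]) (n := 16) (by norm_num)
  have h₄ := Real.exp_bound (x := -(-0.434747)) (by norm_num [abs_le]) (n := 16) (by norm_num)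
  norm_num [abs_le, Finset.sum_range_succ, Nat.factorial] at h₁ h₂ h₃ h₄ ⊢
  linarith [h₁.2, h₂.2, h₃.1, h₄.1]

/-- The unique global minimizer `cs` of `F` satisfies `-0.434749 < cs < -0.434747`. -/
theorem stmt_4 (cs : ℝ) (hmin : ∀ c : ℝ, F cs ≤ F c) :
    -0.434749 < cs ∧ cs < -0.434747 :=
  ⟨convexOn_F.lt_minimizer_of_lt hmin (by norm_num) F_center_lt_F_left,
    convexOn_F.minimizer_lt_of_lt hmin (by norm_num) F_center_lt_F_right⟩
end

section
/- The minimum value of H satisfies 3.8265 < min_{c ∈ ℝ} H(c) < 3.8267. -/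
/-!
`H` is convex in `c`, being an integral of the convex functions `c ↦ e^{-c(x₁+x₂)}`. The shear
`(x₁, x₂) ↦ (x₁, x₁ + x₂)` turns `H c` into `∫_{-1}^{1} (s + 2) e^{-cs} ds`, which gives the
closed form. Taylor bounds for `e^c` at `c = 0.52, 0.526, 0.531` show that `H` is smaller at the
middle point than at the outer ones, so by convexity the minimum is attained in `[0.52, 0.531]`;
the secant lines through these three points bound it from below there.
-/

open MeasureTheory Real Set

/-- The closed trapezium with vertices (2,-1), (-1,2), (-1,0), (0,-1). -/
def T : Set (ℝ × ℝ) :=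
  {p : ℝ × ℝ | -1 ≤ p.1 ∧ -1 ≤ p.2 ∧ -1 ≤ p.1 + p.2 ∧ p.1 + p.2 ≤ 1}

/-- `H c = ∫_T e^{-c(x₁+x₂)} dx₁ dx₂` (Lebesgue measure on ℝ²). -/
noncomputable def H (c : ℝ) : ℝ := ∫ p in T, Real.exp (-c * (p.1 + p.2))

theorem ConvexOn.exists_forall_le_of_le_of_le {f : ℝ → ℝ} {a m b : ℝ} (hf : ConvexOn ℝ univ f)
    (ham : a < m) (hmb : m < b) (ha : f m ≤ f a) (hb : f m ≤ f b) :
    ∃ x₀ ∈ Icc a b, ∀ x, f x₀ ≤ f x := by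
  obtain ⟨x₀, hx₀, hmin⟩ := isCompact_Icc.exists_isMinOn (nonempty_Icc.2 (ham.trans hmb).le)
    ((hf.continuousOn isOpen_univ).mono (subset_univ _))
  refine ⟨x₀, hx₀, fun x => ?_⟩
  rcases lt_or_ge x a with hxa | hax
  · calc f x₀ ≤ f a := hmin (left_mem_Icc.2 (ham.trans hmb).le)
      _ ≤ f x := hf.le_left_of_right_le'' (mem_univ _) (mem_univ _) hxa.le ham ha
  rcases le_or_gt x b with hxb | hbx
  · exact hmin ⟨hax, hxb⟩
  · calc f x₀ ≤ f b := hmin (right_mem_Icc.2 (ham.trans hmb).le)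
      _ ≤ f x := hf.le_right_of_left_le'' (mem_univ _) (mem_univ _) hmb hbx.le hb

theorem ConvexOn.le_of_mem_Icc_of_secant {f : ℝ → ℝ} {a m b L x : ℝ} (hf : ConvexOn ℝ univ f)
    (ham : a < m) (hmb : m < b) (ha : f m ≤ f a) (hb : f m ≤ f b)
    (hLa : (b - m) * (f a - f m) ≤ (m - a) * (f m - L))
    (hLb : (m - a) * (f b - f m) ≤ (b - m) * (f m - L)) (hx : x ∈ Icc a b) : L ≤ f x := by
  rcases lt_trichotomy x m with hxm | rfl | hmx
  · have := hf.secant_mono_aux1 (mem_univ x) (mem_univ b) hxm hmb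
    nlinarith [mul_nonneg (sub_nonneg.2 hx.1) (sub_nonneg.2 hb)]
  · nlinarith [mul_nonneg (sub_nonneg.2 hmb.le) (sub_nonneg.2 ha)]
  · have := hf.secant_mono_aux1 (mem_univ a) (mem_univ x) ham hmx
    nlinarith [mul_nonneg (sub_nonneg.2 hx.2) (sub_nonneg.2 ha)]

theorem convexOn_integral_exp_mul {α : Type*} [MeasurableSpace α] {μ : Measure α} {g : α → ℝ}
    (hg : ∀ c, Integrable (fun p => exp (c * g p)) μ) :
    ConvexOn ℝ univ fun c => ∫ p, exp (c * g p) ∂μ := by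
  refine ⟨convex_univ, fun a _ b _ s t hs ht hst => ?_⟩
  have hpt : ∀ p, exp ((s • a + t • b) * g p) ≤ s * exp (a * g p) + t * exp (b * g p) := by
    intro p
    have := convexOn_exp.2 (mem_univ (a * g p)) (mem_univ (b * g p)) hs ht hst
    simp only [smul_eq_mul] at this ⊢
    rwa [show (s * a + t * b) * g p = s * (a * g p) + t * (b * g p) by ring]
  calc ∫ p, exp ((s • a + t • b) * g p) ∂μ
      ≤ ∫ p, s * exp (a * g p) + t * exp (b * g p) ∂μ :=
        integral_mono (hg _) (((hg a).const_mul s).add ((hg b).const_mul t)) hpt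
    _ = s • ∫ p, exp (a * g p) ∂μ + t • ∫ p, exp (b * g p) ∂μ := by
        rw [integral_add ((hg a).const_mul s) ((hg b).const_mul t), integral_const_mul,
          integral_const_mul, smul_eq_mul, smul_eq_mul]

theorem isClosed_T : IsClosed T := by
  simp only [T, ofPred_and]
  refine (isClosed_le ?_ ?_).inter ((isClosed_le ?_ ?_).inter
    ((isClosed_le ?_ ?_).inter (isClosed_le ?_ ?_))) <;> fun_prop

theorem isCompact_T : IsCompact T := by
  refine isCompact_Icc.of_isClosed_subset isClosed_T (s := Icc (-1, -1) (2, 2)) ?_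
  rintro ⟨x, y⟩ ⟨h₁, h₂, h₃, h₄⟩
  exact ⟨⟨h₁, h₂⟩, show x ≤ 2 ∧ y ≤ 2 by constructor <;> linarith⟩

theorem convexOn_H : ConvexOn ℝ univ H := by
  have hH : H = fun c => ∫ p in T, exp (c * -(p.1 + p.2)) := by
    funext c
    simp only [H, neg_mul, mul_neg]
  rw [hH]
  exact convexOn_integral_exp_mul fun c =>
    (Continuous.continuousOn (by fun_prop)).integrableOn_compact isCompact_T

/-- The `s`-slices of the sheared trapezium are the intervals `[-1, s + 1]`, of length `s + 2`. -/
theorem setIntegral_T_comp_add {g : ℝ → ℝ} (hg : Continuous g) :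
    ∫ p in T, g (p.1 + p.2) = ∫ s in Icc (-1) 1, (s + 2) * g s := by
  set S : Set (ℝ × ℝ) := {q | q.2 ∈ Icc (-1) 1 ∧ q.1 ∈ Icc (-1) (q.2 + 1)} with hS_def
  have hshear := measurePreserving_prod_add (volume : Measure ℝ) (volume : Measure ℝ)
  have hemb : MeasurableEmbedding fun z : ℝ × ℝ => (z.1, z.1 + z.2) :=
    (MeasurableEquiv.shearAddRight ℝ).measurableEmbedding
  have hT : T = (fun z : ℝ × ℝ => (z.1, z.1 + z.2)) ⁻¹' S := by
    ext ⟨x, y⟩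
    simp only [T, S, mem_ofPred_eq, mem_preimage, mem_Icc]
    constructor
    · rintro ⟨h₁, h₂, h₃, h₄⟩
      exact ⟨⟨h₃, h₄⟩, h₁, by linarith⟩
    · rintro ⟨⟨h₃, h₄⟩, h₁, h₂⟩
      exact ⟨h₁, by linarith, h₃, h₄⟩
  have hS : MeasurableSet S := by
    simp only [hS_def, mem_Icc]
    measurability
  have hint : IntegrableOn (fun q : ℝ × ℝ => g q.2) S (volume.prod volume) := by
    rw [← hshear.integrableOn_comp_preimage hemb, ← hT]
    exact (Continuous.continuousOn (by fun_prop)).integrableOn_compact isCompact_T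
  have hslice : ∀ y, ∫ x, S.indicator (fun q => g q.2) (x, y)
      = (Icc (-1) 1).indicator (fun s => (s + 2) * g s) y := by
    intro y
    by_cases hy : y ∈ Icc (-1 : ℝ) 1
    · have : (fun x => S.indicator (fun q => g q.2) (x, y))
          = (Icc (-1) (y + 1)).indicator fun _ => g y := by
        ext x
        simp only [S, indicator, mem_ofPred_eq, hy, true_and]
      rw [this, integral_indicator_const _ measurableSet_Icc, indicator_of_mem hy,
        volume_real_Icc_of_le (by linarith [hy.1]), smul_eq_mul]
      ring
    · have hyS : ∀ x, (x, y) ∉ S := fun x h => hy h.1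
      simp only [indicator_of_notMem (hyS _), indicator_of_notMem hy, integral_zero]
  calc ∫ p in T, g (p.1 + p.2)
      = ∫ q in S, g q.2 ∂(volume.prod volume) := by
        rw [hT, Measure.volume_eq_prod]
        exact hshear.setIntegral_preimage_emb hemb (fun q => g q.2) S
    _ = ∫ y, ∫ x, S.indicator (fun q => g q.2) (x, y) := by
        rw [← integral_indicator hS, integral_prod_symm _ ((integrable_indicator_iff hS).2 hint)]
    _ = ∫ s in Icc (-1) 1, (s + 2) * g s := by
        simp_rw [hslice]
        exact integral_indicator measurableSet_Icc

theorem H_eq_setIntegral (c : ℝ) : H c = ∫ s in Icc (-1) 1, (s + 2) * exp (-c * s) :=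
  setIntegral_T_comp_add (g := fun s => exp (-c * s)) (by fun_prop)

theorem H_eq {c : ℝ} (hc : c ≠ 0) :
    H c = ((1 + c) * exp c - (1 + 3 * c) * exp (-c)) / c ^ 2 := by
  have hderiv : ∀ s, HasDerivAt (fun s => exp (-c * s) * (-1 / c * s - (2 * c + 1) / c ^ 2))
      ((s + 2) * exp (-c * s)) s := by
    intro s
    have hexp := ((hasDerivAt_id' s).const_mul (-c)).exp
    have hpoly := ((hasDerivAt_id' s).const_mul (-1 / c)).sub_const ((2 * c + 1) / c ^ 2)
    refine (hexp.mul hpoly).congr_deriv ?_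
    field_simp
    ring
  rw [H_eq_setIntegral, integral_Icc_eq_integral_Ioc,
    ← intervalIntegral.integral_of_le (by norm_num),
    intervalIntegral.integral_eq_sub_of_hasDerivAt (fun s _ => hderiv s)
      (Continuous.intervalIntegrable (by fun_prop) _ _)]
  field_simp
  ring

/-- The closed form is increasing in `e^c`, so Taylor bounds for `e^c` transfer to `H c`. -/
theorem H_bounds_of_taylor {c : ℝ} (hc₀ : 0 < c) (hc₁ : c ≤ 1) :
    let lo := ∑ i ∈ Finset.range 10, c ^ i / i.factorial
    let hi := lo + c ^ 10 * 11 / (Nat.factorial 10 * 10)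
    ((1 + c) * lo - (1 + 3 * c) / lo) / c ^ 2 ≤ H c ∧
      H c ≤ ((1 + c) * hi - (1 + 3 * c) / hi) / c ^ 2 := by
  intro lo hi
  have hlo : 0 < lo := Finset.sum_pos (fun i _ => by positivity) ⟨0, by simp⟩
  have h_lo : lo ≤ exp c := sum_le_exp_of_nonneg hc₀.le 10
  have h_hi : exp c ≤ hi :=
    (exp_bound' hc₀.le hc₁ (n := 10) (by norm_num)).trans_eq (by norm_num [hi, lo])
  rw [H_eq hc₀.ne', exp_neg, ← div_eq_mul_inv]
  constructor <;> gcongr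

/-- The minimum value of `H` lies strictly between `3.8265` and `3.8267`. -/
theorem stmt_11 :
    ∃ cs : ℝ, (∀ c : ℝ, H cs ≤ H c) ∧ 3.8265 < H cs ∧ H cs < 3.8267 := by
  have ha := H_bounds_of_taylor (c := 13 / 25) (by norm_num) (by norm_num)
  have hm := H_bounds_of_taylor (c := 263 / 500) (by norm_num) (by norm_num)
  have hb := H_bounds_of_taylor (c := 531 / 1000) (by norm_num) (by norm_num)
  norm_num [Finset.sum_range_succ, Nat.factorial] at ha hm hb
  obtain ⟨cs, hcs, hmin⟩ := convexOn_H.exists_forall_le_of_le_of_le (a := 13 / 25)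
    (m := 263 / 500) (b := 531 / 1000) (by norm_num) (by norm_num) (by linarith) (by linarith)
  refine ⟨cs, hmin, ?_, by linarith [hmin (263 / 500)]⟩
  refine lt_of_lt_of_le (by norm_num) (convexOn_H.le_of_mem_Icc_of_secant (m := 263 / 500)
    (L := 3.82652) (by norm_num) (by norm_num) (by linarith) (by linarith) (by linarith)
    (by linarith) hcs)
end

section
/- The function f attains a global minimum on (0,∞), and its minimum value m = inf_{x > 0} f(x) satisfies 7.1364 < m < 7.1365; moreover the minimum is attained at a point x* with 0.9577 < x* < 0.9578. -/
open Real Set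

/-- The rational function from Chen–LeBrun–Weber whose minimum over `(0,∞)` gives
the minimal Calabi energy `c_min = 32π² · min f` on `CP²#2(CP²-bar)`. -/
noncomputable def f (x : ℝ) : ℝ :=
  3 * (32 + 176*x + 318*x^2 + 280*x^3 + 132*x^4 + 32*x^5 + 3*x^6) /
    (12 + 72*x + 138*x^2 + 120*x^3 + 54*x^4 + 12*x^5 + x^6)

/-- The numerator polynomial of `12 · f'`. -/
def Pcrit (t : ℝ) : ℝ :=
  t^10 + 15*t^9 + 96*t^8 + 336*t^7 + 680*t^6 + 720*t^5 + 120*t^4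
    - 624*t^3 - 708*t^2 - 300*t - 48

lemma Dpos (x : ℝ) (hx : 0 < x) :
    0 < 12 + 72*x + 138*x^2 + 120*x^3 + 54*x^4 + 12*x^5 + x^6 := by positivity

lemma exists_root : ∃ t ∈ Set.Ioo (0.9577 : ℝ) 0.9578, Pcrit t = 0 := by
  have hc : ContinuousOn Pcrit (Set.Icc (0.9577 : ℝ) 0.9578) := by
    unfold Pcrit; fun_prop
  have h := intermediate_value_Ioo (by norm_num : (0.9577 : ℝ) ≤ 0.9578) hc
  have h0 : (0 : ℝ) ∈ Set.Ioo (Pcrit 0.9577) (Pcrit 0.9578) := by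
    constructor <;> (unfold Pcrit; norm_num)
  obtain ⟨t, ht, hPt⟩ := h h0
  exact ⟨t, ht, hPt⟩

set_option maxHeartbeats 1000000 in
/-- The key inequality: if `t` is a root of `Pcrit` in the interval, then `f t ≤ f x`
for all `x > 0`. -/
lemma key (t : ℝ) (hP : Pcrit t = 0) (h1 : (0.9577 : ℝ) < t) (h2 : t < 0.9578)
    (x : ℝ) (hx : 0 < x) : f t ≤ f x := by
  have ht : (0 : ℝ) < t := by linarith
  have hDt := Dpos t ht
  have hDx := Dpos x hx
  unfold f
  rw [div_le_div_iff₀ hDt hDx]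
  -- coefficients of the quotient polynomial Q(x,t)
  have hc0 : (0:ℝ) < 12*t^9+180*t^8+1152*t^7+4032*t^6+8160*t^5+8628*t^4+1440*t^3-7056*t^2-7056*t-1800 := by
    nlinarith [pow_pos ht 3, pow_pos ht 4, pow_pos ht 5, pow_pos ht 6, pow_pos ht 7, pow_pos ht 8, pow_pos ht 9]
  have hc1 : (0:ℝ) < 12*t^8+180*t^7+1152*t^6+4032*t^5+8040*t^4+8040*t^3+1440*t^2-3744*t-1440 := by
    nlinarith [pow_pos ht 2, pow_pos ht 3, pow_pos ht 4, pow_pos ht 5, pow_pos ht 6, pow_pos ht 7, pow_pos ht 8]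
  have hc2 : (0:ℝ) < 12*t^7+180*t^6+1152*t^5+3744*t^4+6120*t^3+4320*t^2-432 := by
    nlinarith [pow_pos ht 2, pow_pos ht 3, pow_pos ht 4, pow_pos ht 5, pow_pos ht 6, pow_pos ht 7]
  have hc3 : (0:ℝ) < 12*t^6+180*t^5+912*t^4+2016*t^3+2040*t^2+600*t := by positivity
  have hc4 : (0:ℝ) < 12*t^5+90*t^4+240*t^3+288*t^2+120*t+12 := by positivity
  have hQ : (0:ℝ) ≤ (12*t^9+180*t^8+1152*t^7+4032*t^6+8160*t^5+8628*t^4+1440*t^3-7056*t^2-7056*t-1800)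
      + (12*t^8+180*t^7+1152*t^6+4032*t^5+8040*t^4+8040*t^3+1440*t^2-3744*t-1440)*x
      + (12*t^7+180*t^6+1152*t^5+3744*t^4+6120*t^3+4320*t^2-432)*x^2
      + (12*t^6+180*t^5+912*t^4+2016*t^3+2040*t^2+600*t)*x^3
      + (12*t^5+90*t^4+240*t^3+288*t^2+120*t+12)*x^4 := by
    have h1 := mul_pos hc1 hx
    have h2 := mul_pos hc2 (pow_pos hx 2)
    have h3 := mul_pos hc3 (pow_pos hx 3)
    have h4 := mul_pos hc4 (pow_pos hx 4)
    linarith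
  have hsq : (0:ℝ) ≤ (x - t)^2 := sq_nonneg _
  have hident : 3 * (32 + 176*x + 318*x^2 + 280*x^3 + 132*x^4 + 32*x^5 + 3*x^6) *
        (12 + 72*t + 138*t^2 + 120*t^3 + 54*t^4 + 12*t^5 + t^6)
      - 3 * (32 + 176*t + 318*t^2 + 280*t^3 + 132*t^4 + 32*t^5 + 3*t^6) *
        (12 + 72*x + 138*x^2 + 120*x^3 + 54*x^4 + 12*x^5 + x^6)
      = (x - t)^2 * ((12*t^9+180*t^8+1152*t^7+4032*t^6+8160*t^5+8628*t^4+1440*t^3-7056*t^2-7056*t-1800)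
      + (12*t^8+180*t^7+1152*t^6+4032*t^5+8040*t^4+8040*t^3+1440*t^2-3744*t-1440)*x
      + (12*t^7+180*t^6+1152*t^5+3744*t^4+6120*t^3+4320*t^2-432)*x^2
      + (12*t^6+180*t^5+912*t^4+2016*t^3+2040*t^2+600*t)*x^3
      + (12*t^5+90*t^4+240*t^3+288*t^2+120*t+12)*x^4)
      := by
    unfold Pcrit at hP
    linear_combination (12*(x-t)) * hP
  linarith [mul_nonneg hsq hQ, hident]

/-- `f` attains a global minimum on `(0,∞)`; its minimum value lies strictly between
`7.1364` and `7.1365`, attained at a point `x*` with `0.9577 < x* < 0.9578`. -/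
theorem stmt_13 :
    ∃ xs : ℝ, xs ∈ Set.Ioi (0 : ℝ) ∧ (∀ x ∈ Set.Ioi (0 : ℝ), f xs ≤ f x) ∧
      (7.1364 < f xs ∧ f xs < 7.1365) ∧ (0.9577 < xs ∧ xs < 0.9578) := by
  obtain ⟨t, ⟨h1, h2⟩, hP⟩ := exists_root
  have ht : (0 : ℝ) < t := by linarith
  have hDt := Dpos t ht
  refine ⟨t, ht, fun x hx => key t hP h1 h2 x hx, ⟨?_, ?_⟩, h1, h2⟩
  · unfold f
    rw [lt_div_iff₀ hDt]
    nlinarith [sq_nonneg (t - 0.9577), mul_pos (sub_pos.2 h1) (sub_pos.2 h1),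
      pow_pos ht 2, pow_pos ht 3, pow_pos ht 4, pow_pos ht 5, pow_pos ht 6]
  · unfold f
    rw [div_lt_iff₀ hDt]
    nlinarith [sq_nonneg (t - 0.9577), mul_pos (sub_pos.2 h1) (sub_pos.2 h1),
      pow_pos ht 2, pow_pos ht 3, pow_pos ht 4, pow_pos ht 5, pow_pos ht 6]
end

section
/- With m = inf_{x > 0} f(x), the quantity Θ = (21/2 - m)/e² satisfies |Θ - 0.4552| < 5·10^{-5}; that is, the Gaussian density of the Chen–LeBrun–Weber Einstein metric equals 0.4552 to four decimal places. -/
open Real Set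

lemma f_lower (x : ℝ) (hx : 0 < x) : (71364 : ℝ) / 10000 ≤ f x := by
  have hD : (0:ℝ) < 12 + 72*x + 138*x^2 + 120*x^3 + 54*x^4 + 12*x^5 + x^6 := by positivity
  rw [f, le_div_iff₀ hD]
  nlinarith [mul_nonneg (sq_nonneg (x - 9577/10000)) hx.le,
    mul_nonneg (mul_nonneg (sq_nonneg (x - 9577/10000)) hx.le) hx.le,
    mul_nonneg (mul_nonneg (mul_nonneg (sq_nonneg (x - 9577/10000)) hx.le) hx.le) hx.le,
    mul_nonneg (mul_nonneg (mul_nonneg (mul_nonneg (sq_nonneg (x - 9577/10000)) hx.le) hx.le) hx.le) hx.le,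
    sq_nonneg (x - 9577/10000), sq_nonneg (x*x - 1), sq_nonneg x, hx.le,
    sq_nonneg (500*x - 303)]

lemma f_upper : f (9577/10000) ≤ (713648 : ℝ) / 100000 := by
  rw [f, div_le_iff₀ (by norm_num)]
  norm_num

/-- With `m = inf_{x>0} f x`, the Gaussian density `Θ = (21/2 - m)/e²` of the
Chen–LeBrun–Weber metric equals `0.4552` to four decimal places. -/
theorem stmt_14 :
    |(21 / 2 - sInf (f '' Set.Ioi (0 : ℝ))) / Real.exp 2 - 0.4552| < 5e-5 := by
  set m := sInf (f '' Set.Ioi (0 : ℝ)) with hm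
  have hbdd : BddBelow (f '' Set.Ioi (0 : ℝ)) := by
    refine ⟨(71364 : ℝ) / 10000, ?_⟩
    rintro y ⟨x, hx, rfl⟩
    exact f_lower x hx
  have hmem : f (9577/10000) ∈ f '' Set.Ioi (0 : ℝ) :=
    ⟨9577/10000, by norm_num, rfl⟩
  have hm2 : m ≤ (713648 : ℝ) / 100000 :=
    le_trans (csInf_le hbdd hmem) f_upper
  have hm1 : (71364 : ℝ) / 10000 ≤ m := by
    apply le_csInf ⟨f (9577/10000), hmem⟩
    rintro y ⟨x, hx, rfl⟩
    exact f_lower x hx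
  have hE2 : Real.exp 2 = Real.exp 1 * Real.exp 1 := by
    rw [← Real.exp_add]; norm_num
  have he1 : (7.3890560950 : ℝ) < Real.exp 2 := by
    rw [hE2]; nlinarith [Real.exp_one_gt_d9, Real.exp_pos 1]
  have he2 : Real.exp 2 < (7.3890561110 : ℝ) := by
    rw [hE2]; nlinarith [Real.exp_one_lt_d9, Real.exp_pos 1]
  have hEpos : (0:ℝ) < Real.exp 2 := Real.exp_pos 2
  have h1 : (21 / 2 - m) / Real.exp 2 < 0.45525 := by
    rw [div_lt_iff₀ hEpos]; nlinarith
  have h2 : (0.45515 : ℝ) < (21 / 2 - m) / Real.exp 2 := by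
    rw [lt_div_iff₀ hEpos]; nlinarith
  rw [abs_lt]
  constructor <;> [nlinarith; nlinarith]
end
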